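/- For every ω ∈ ℂ ∖ 𝒞 the following spectral-curve identity holds: G(ω)^2 · G(1/ω)^2 = -1 + G(ω)^2 + G(1/ω)^2 + (2/c) · G(ω) · G(1/ω). -/

import Mathlib

/-- `c = a/(1+a²)`. -/
noncomputable def cOf (a : ℝ) : ℝ := a / (1 + a ^ 2)

/-- The branch of the logarithm with argument in `(-π/2, 3π/2]`:
`L(z) = Log(-iz) + iπ/2` where `Log` is the principal branch. -/
noncomputable def Lbr (z : ℂ) : ℂ :=
  Complex.log (-Complex.I * z) + Complex.I * ((Real.pi : ℂ) / 2)

/-- The branch `√(ω² + 2c) = exp((1/2)L(ω + i√(2c)) + (1/2)L(ω - i√(2c)))`. -/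
noncomputable def sqBr (a : ℝ) (ω : ℂ) : ℂ :=
  Complex.exp ((1 / 2 : ℂ) * Lbr (ω + Complex.I * (Real.sqrt (2 * cOf a) : ℂ)) +
    (1 / 2 : ℂ) * Lbr (ω - Complex.I * (Real.sqrt (2 * cOf a) : ℂ)))

/-- `G(ω) = (ω - √(ω² + 2c))/√(2c)`. -/
noncomputable def Gbr (a : ℝ) (ω : ℂ) : ℂ :=
  (ω - sqBr a ω) / (Real.sqrt (2 * cOf a) : ℂ)

/-- The branch cuts `𝒞 = i·((-∞, -1/√(2c)] ∪ [-√(2c), √(2c)] ∪ [1/√(2c), ∞))`. -/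
def cuts (a : ℝ) : Set ℂ :=
  {z : ℂ | ∃ t : ℝ, z = Complex.I * (t : ℂ) ∧
    (t ≤ -(1 / Real.sqrt (2 * cOf a)) ∨
      (-Real.sqrt (2 * cOf a) ≤ t ∧ t ≤ Real.sqrt (2 * cOf a)) ∨
      1 / Real.sqrt (2 * cOf a) ≤ t)}

/-!
Off the cuts both factors `ω ± i√(2c)` are nonzero, so `√(ω² + 2c)` squares to `ω² + 2c`, and
`G = G(ω)` is a root of `√(2c)(G² - 1) = 2ωG`. The cuts are invariant under `ω ↦ ω⁻¹`, so
`H = G(1/ω)` satisfies the same relation with `ω⁻¹` in place of `ω`. Multiplying the two relations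
eliminates `ω` and gives `(G² - 1)(H² - 1) = (2/c)GH`, which is the spectral-curve identity.
-/

lemma quadratic_of_sq_eq_sq_add_sq {K : Type*} [Field K] {ω S s : K} (hs : s ≠ 0)
    (hS : S ^ 2 = ω ^ 2 + s ^ 2) :
    s * (((ω - S) / s) ^ 2 - 1) = 2 * ω * ((ω - S) / s) := by
  field_simp
  linear_combination hS

lemma spectral_curve_of_quadratic {K : Type*} [Field K] {ω s g h : K} (hω : ω ≠ 0) (hs : s ≠ 0)
    (hg : s * (g ^ 2 - 1) = 2 * ω * g) (hh : s * (h ^ 2 - 1) = 2 * ω⁻¹ * h) :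
    g ^ 2 * h ^ 2 = -1 + g ^ 2 + h ^ 2 + 4 / s ^ 2 * g * h := by
  have hprod : s ^ 2 * ((g ^ 2 - 1) * (h ^ 2 - 1)) = 4 * g * h := by
    linear_combination (s * (h ^ 2 - 1)) * hg + (2 * ω * g) * hh + 4 * g * h * mul_inv_cancel₀ hω
  field_simp
  linear_combination hprod

open Complex

lemma exp_Lbr {z : ℂ} (hz : z ≠ 0) : exp (Lbr z) = z := by
  have hI : exp (I * ((Real.pi : ℂ) / 2)) = I := by
    rw [mul_comm, exp_mul_I, ← ofReal_ofNat, ← ofReal_div, ← ofReal_cos, ← ofReal_sin]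
    simp
  rw [Lbr, exp_add, exp_log (by simpa using hz), hI]
  linear_combination (-z) * I_sq

lemma exp_half_Lbr_add_half_Lbr_sq {z w : ℂ} (hz : z ≠ 0) (hw : w ≠ 0) :
    exp ((1 / 2) * Lbr z + (1 / 2) * Lbr w) ^ 2 = z * w := by
  rw [← exp_nat_mul, Nat.cast_ofNat, show (2 : ℂ) * ((1 / 2) * Lbr z + (1 / 2) * Lbr w) =
    Lbr z + Lbr w by ring, exp_add, exp_Lbr hz, exp_Lbr hw]

lemma cut_param_neg_inv {s t : ℝ} (hs : 0 ≤ s)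
    (ht : t ≤ -(1 / s) ∨ (-s ≤ t ∧ t ≤ s) ∨ 1 / s ≤ t) :
    -t⁻¹ ≤ -(1 / s) ∨ (-s ≤ -t⁻¹ ∧ -t⁻¹ ≤ s) ∨ 1 / s ≤ -t⁻¹ := by
  rcases hs.eq_or_lt with rfl | hs
  · rcases le_total (-t⁻¹) 0 with h | h <;> simp [h]
  rw [one_div] at ht ⊢
  rcases lt_trichotomy t 0 with h | rfl | h
  · have h' : 0 < -t := neg_pos.mpr h
    rcases ht with ht | ⟨ht, -⟩ | ht
    · refine Or.inr (Or.inl ⟨by linarith [inv_lt_zero.mpr h], ?_⟩)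
      rw [← inv_neg]
      exact inv_le_of_inv_le₀ hs (by linarith)
    · refine Or.inr (Or.inr ?_)
      rw [← inv_neg]
      exact inv_anti₀ h' (by linarith)
    · linarith [inv_pos.mpr hs]
  · simp [hs.le]
  · rcases ht with ht | ⟨-, ht⟩ | ht
    · linarith [inv_pos.mpr hs]
    · exact Or.inl (neg_le_neg (inv_anti₀ h ht))
    · exact Or.inr (Or.inl ⟨neg_le_neg (inv_le_of_inv_le₀ hs ht), by linarith [inv_pos.mpr h]⟩)

lemma inv_mem_cuts {a : ℝ} {ω : ℂ} (hω : ω ∈ cuts a) : ω⁻¹ ∈ cuts a := by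
  obtain ⟨t, rfl, ht⟩ := hω
  refine ⟨-t⁻¹, ?_, cut_param_neg_inv (Real.sqrt_nonneg _) ht⟩
  rw [mul_inv, inv_I]
  push_cast
  ring

@[simp]
lemma inv_mem_cuts_iff {a : ℝ} {ω : ℂ} : ω⁻¹ ∈ cuts a ↔ ω ∈ cuts a :=
  ⟨fun h => inv_inv ω ▸ inv_mem_cuts h, inv_mem_cuts⟩

section
variable {a : ℝ} {z : ℂ}

lemma I_mul_mem_cuts {t : ℝ} (ht : |t| ≤ Real.sqrt (2 * cOf a)) : I * t ∈ cuts a :=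
  ⟨t, rfl, Or.inr (Or.inl (abs_le.mp ht))⟩

lemma ne_zero_of_notMem_cuts (hz : z ∉ cuts a) : z ≠ 0 := by
  rintro rfl
  exact hz (by simpa using I_mul_mem_cuts (a := a) (t := 0) (by simp))

lemma sqBr_sq (hz : z ∉ cuts a) :
    sqBr a z ^ 2 = z ^ 2 + (Real.sqrt (2 * cOf a) : ℂ) ^ 2 := by
  have hs : |Real.sqrt (2 * cOf a)| ≤ Real.sqrt (2 * cOf a) :=
    (abs_of_nonneg (Real.sqrt_nonneg _)).le
  have hplus : z + I * Real.sqrt (2 * cOf a) ≠ 0 := by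
    intro h
    refine hz (eq_neg_of_add_eq_zero_left h ▸ ?_)
    simpa using I_mul_mem_cuts (a := a) (t := -Real.sqrt (2 * cOf a)) (by rwa [abs_neg])
  have hminus : z - I * Real.sqrt (2 * cOf a) ≠ 0 :=
    fun h => hz (sub_eq_zero.mp h ▸ I_mul_mem_cuts hs)
  rw [sqBr, exp_half_Lbr_add_half_Lbr_sq hplus hminus]
  linear_combination (-(Real.sqrt (2 * cOf a) : ℂ) ^ 2) * I_sq

lemma Gbr_quadratic (hs : (Real.sqrt (2 * cOf a) : ℂ) ≠ 0) (hz : z ∉ cuts a) :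
    Real.sqrt (2 * cOf a) * (Gbr a z ^ 2 - 1) = 2 * z * Gbr a z :=
  quadratic_of_sq_eq_sq_add_sq hs (sqBr_sq hz)

end

theorem statement3_general (a : ℝ) (ha0 : 0 < a) (ω : ℂ) (hω : ω ∉ cuts a) :
    Gbr a ω ^ 2 * Gbr a ω⁻¹ ^ 2 =
      -1 + Gbr a ω ^ 2 + Gbr a ω⁻¹ ^ 2 + (2 / (cOf a : ℂ)) * Gbr a ω * Gbr a ω⁻¹ := by
  have hc : 0 < 2 * cOf a := mul_pos two_pos (div_pos ha0 (by positivity))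
  have hs : (Real.sqrt (2 * cOf a) : ℂ) ≠ 0 := ofReal_ne_zero.mpr (Real.sqrt_pos.mpr hc).ne'
  have hs2 : 4 / (Real.sqrt (2 * cOf a) : ℂ) ^ 2 = 2 / (cOf a : ℂ) := by
    rw [← ofReal_pow, Real.sq_sqrt hc.le]
    push_cast
    ring
  rw [← hs2]
  exact spectral_curve_of_quadratic (ne_zero_of_notMem_cuts hω) hs (Gbr_quadratic hs hω)
    (Gbr_quadratic hs (inv_mem_cuts_iff.not.mpr hω))

/-- For every `ω ∈ ℂ ∖ 𝒞`, the spectral-curve identity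
`G(ω)²·G(1/ω)² = -1 + G(ω)² + G(1/ω)² + (2/c)·G(ω)·G(1/ω)` holds. -/
theorem statement3 (a : ℝ) (ha0 : 0 < a) (ha1 : a < 1) (ω : ℂ) (hω : ω ∉ cuts a) :
    Gbr a ω ^ 2 * Gbr a ω⁻¹ ^ 2 =
      -1 + Gbr a ω ^ 2 + Gbr a ω⁻¹ ^ 2 + (2 / (cOf a : ℂ)) * Gbr a ω * Gbr a ω⁻¹ :=
  statement3_general a ha0 ω hω
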